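/- For each n ≥ 1 and conjugate exponent pair (p,q), the optimal constant K_{n,p} = 2^{−n−1/q} ‖φ̃_n‖_{L^q([-1,1])}/n! (where φ̃_n minimizes the L^q norm among monic degree-n polynomials on [-1,1]) is a nonincreasing function of p; in particular K_{n,p} ≤ K_{n,1} = 2^{1−2n}/n! for all p ∈ [1,∞]. -/

import Mathlib

open MeasureTheory Polynomial
open scoped ENNReal

/-- The optimal constant `K_{n,p} = 2^{-n-1/q} ‖φ̃ₙ‖_{L^q([-1,1])}/n!`, expressed as the
infimum over monic degree-`n` polynomials, parametrized by the conjugate exponent `q`. -/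
noncomputable def trapConst (n : ℕ) (q : ℝ≥0∞) : ℝ≥0∞ :=
  sInf ((fun φ : Polynomial ℝ =>
    ENNReal.ofReal ((2 : ℝ) ^ (-(n : ℝ) - q⁻¹.toReal)) *
      eLpNorm (fun x => φ.eval x) q (volume.restrict (Set.Icc (-1 : ℝ) 1)) /
      (n.factorial : ℝ≥0∞)) '' {φ : Polynomial ℝ | φ.Monic ∧ φ.natDegree = n})

open Set

/-! By Hölder's inequality against the constant function, `μ(univ)^(-1/q) ‖f‖_q` is nondecreasing
in `q` for a finite measure `μ`; for `μ` Lebesgue measure on `[-1, 1]`, `μ(univ)^(-1/q) = 2^(-1/q)`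
is exactly the weight in `trapConst`, so `trapConst n` is monotone in `q`, i.e. antitone in `p`.
At `q = ∞` the infimum is attained by the monic Chebyshev polynomial `2^(1-n) Tₙ`, whose sup norm on
`[-1, 1]` is `2^(1-n)`; no monic polynomial does better, because a real polynomial of degree `n`
bounded by `1` on `[-1, 1]` has leading coefficient at most `2^(n-1)`. -/

lemma ENNReal.HolderConjugate.le_of_le {p₁ q₁ p₂ q₂ : ℝ≥0∞} (h₁ : p₁.HolderConjugate q₁)
    (h₂ : p₂.HolderConjugate q₂) (hp : p₁ ≤ p₂) : q₂ ≤ q₁ := by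
  rw [← ENNReal.inv_le_inv, ← h₁.one_sub_inv, ← h₂.one_sub_inv]
  gcongr

theorem measure_univ_rpow_neg_mul_eLpNorm_le {α E : Type*} [MeasurableSpace α]
    [NormedAddCommGroup E] {μ : Measure α} (hμ₀ : μ univ ≠ 0) (hμ : μ univ ≠ ∞)
    {p q : ℝ≥0∞} (hpq : p ≤ q) {f : α → E} (hf : AEStronglyMeasurable f μ) :
    μ univ ^ (-p⁻¹.toReal) * eLpNorm f p μ ≤ μ univ ^ (-q⁻¹.toReal) * eLpNorm f q μ :=
  calc μ univ ^ (-p⁻¹.toReal) * eLpNorm f p μ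
      ≤ μ univ ^ (-p⁻¹.toReal) * (eLpNorm f q μ * μ univ ^ (1 / p.toReal - 1 / q.toReal)) := by
        gcongr
        exact eLpNorm_le_eLpNorm_mul_rpow_measure_univ hpq hf
    _ = μ univ ^ (-q⁻¹.toReal) * eLpNorm f q μ := by
        rw [mul_left_comm, ← ENNReal.rpow_add _ _ hμ₀ hμ, ENNReal.toReal_inv, ENNReal.toReal_inv]
        ring_nf

theorem enorm_le_eLpNormEssSup_restrict_Icc {X E : Type*} [TopologicalSpace X] [LinearOrder X]
    [OrderTopology X] [DenselyOrdered X] [MeasurableSpace X] {μ : Measure X} [μ.IsOpenPosMeasure]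
    [NormedAddCommGroup E] {f : X → E} {a b x : X} (hab : a ≠ b) (hf : ContinuousOn f (Icc a b))
    (hx : x ∈ Icc a b) : ‖f x‖ₑ ≤ eLpNormEssSup f (μ.restrict (Icc a b)) := by
  set c := eLpNormEssSup f (μ.restrict (Icc a b))
  have hcont : ContinuousOn (fun y => ‖f y‖ₑ) (Icc a b) := continuous_enorm.comp_continuousOn hf
  have hmin : EqOn (fun y => min ‖f y‖ₑ c) (fun y => ‖f y‖ₑ) (Icc a b) :=
    Measure.eqOn_Icc_of_ae_eq μ hab (ae_le_eLpNormEssSup.mono fun y hy => min_eq_left hy)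
      (hcont.inf continuousOn_const) hcont
  exact min_eq_left_iff.1 (hmin hx)

theorem Polynomial.Monic.inv_two_pow_le_of_forall_abs_le {φ : ℝ[X]} (hφ : φ.Monic) {c : ℝ}
    (hc : 0 < c) (hφc : ∀ x ∈ Icc (-1 : ℝ) 1, |φ.eval x| ≤ c) :
    (2 ^ (φ.natDegree - 1))⁻¹ ≤ c := by
  have hlead : (C c⁻¹ * φ).leadingCoeff ≤ 2 ^ (φ.natDegree - 1) := by
    refine Chebyshev.leadingCoeff_le_of_forall_abs_le_one
      ((degree_C_mul (inv_ne_zero hc.ne')).trans_le degree_le_natDegree) fun x hx => ?_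
    rw [eval_mul, eval_C, abs_mul, abs_inv, abs_of_pos hc]
    exact inv_mul_le_one_of_le₀ (hφc x hx) hc.le
  rw [leadingCoeff_mul, leadingCoeff_C, hφ.leadingCoeff, mul_one] at hlead
  exact inv_le_of_inv_le₀ hc hlead

noncomputable def monicChebyshevT (n : ℕ) : ℝ[X] := C (2 ^ (n - 1))⁻¹ * Chebyshev.T ℝ n

theorem monic_monicChebyshevT (n : ℕ) : (monicChebyshevT n).Monic := by
  rw [Monic, monicChebyshevT, leadingCoeff_mul, leadingCoeff_C, Chebyshev.leadingCoeff_T]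
  simp

theorem natDegree_monicChebyshevT (n : ℕ) : (monicChebyshevT n).natDegree = n := by
  rw [monicChebyshevT, natDegree_C_mul (by positivity), Chebyshev.natDegree_T]
  simp

theorem abs_eval_monicChebyshevT_le (n : ℕ) {x : ℝ} (hx : x ∈ Icc (-1 : ℝ) 1) :
    |(monicChebyshevT n).eval x| ≤ (2 ^ (n - 1))⁻¹ := by
  have hT : |(Chebyshev.T ℝ n).eval x| ≤ 1 := by
    rw [← Real.cos_arccos hx.1 hx.2, Chebyshev.T_real_cos]
    exact Real.abs_cos_le_one _
  rw [monicChebyshevT, eval_mul, eval_C, abs_mul, abs_of_pos (by positivity)]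
  exact mul_le_of_le_one_right (by positivity) hT

theorem eLpNorm_top_monicChebyshevT_le (n : ℕ) :
    eLpNorm (fun x => (monicChebyshevT n).eval x) ∞ (volume.restrict (Icc (-1 : ℝ) 1)) ≤
      ENNReal.ofReal (2 ^ (n - 1))⁻¹ := by
  rw [eLpNorm_exponent_top]
  exact eLpNormEssSup_le_of_ae_bound <| (ae_restrict_iff' measurableSet_Icc).2 <|
    .of_forall fun x hx => abs_eval_monicChebyshevT_le n hx

theorem Polynomial.Monic.ofReal_le_eLpNorm_top {φ : ℝ[X]} (hφ : φ.Monic) :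
    ENNReal.ofReal (2 ^ (φ.natDegree - 1))⁻¹ ≤
      eLpNorm (fun x => φ.eval x) ∞ (volume.restrict (Icc (-1 : ℝ) 1)) := by
  by_contra! hlt
  obtain ⟨d, hφd, hd⟩ := exists_between hlt
  have hd_top : d ≠ ∞ := (hd.trans ENNReal.ofReal_lt_top).ne
  have hc : 0 < d.toReal := ENNReal.toReal_pos (pos_of_gt hφd).ne' hd_top
  have hφc : ∀ x ∈ Icc (-1 : ℝ) 1, |φ.eval x| ≤ d.toReal := fun x hx => by
    have := (enorm_le_eLpNormEssSup_restrict_Icc (μ := volume) (by norm_num)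
      φ.continuous.continuousOn hx).trans_lt hφd
    rw [Real.enorm_eq_ofReal_abs, ← ENNReal.ofReal_toReal hd_top] at this
    exact (ENNReal.ofReal_lt_ofReal_iff hc).1 this |>.le
  rw [← ENNReal.ofReal_toReal hd_top, ENNReal.ofReal_lt_ofReal_iff (by positivity)] at hd
  exact hd.not_ge (hφ.inv_two_pow_le_of_forall_abs_le hc hφc)

theorem isLeast_eLpNorm_top_monic (n : ℕ) :
    IsLeast ((fun φ : ℝ[X] => eLpNorm (fun x => φ.eval x) ∞ (volume.restrict (Icc (-1 : ℝ) 1))) ''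
      {φ | φ.Monic ∧ φ.natDegree = n}) (ENNReal.ofReal (2 ^ (n - 1))⁻¹) := by
  refine ⟨⟨monicChebyshevT n, ⟨monic_monicChebyshevT n, natDegree_monicChebyshevT n⟩, ?_⟩, ?_⟩
  · refine (eLpNorm_top_monicChebyshevT_le n).antisymm ?_
    simpa [natDegree_monicChebyshevT] using (monic_monicChebyshevT n).ofReal_le_eLpNorm_top
  · rintro _ ⟨φ, ⟨hφ, rfl⟩, rfl⟩
    exact hφ.ofReal_le_eLpNorm_top

theorem ofReal_two_rpow_neg_sub (n : ℕ) (q : ℝ≥0∞) :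
    ENNReal.ofReal (2 ^ (-(n : ℝ) - q⁻¹.toReal)) =
      ENNReal.ofReal (2 ^ (-(n : ℝ))) * volume.restrict (Icc (-1 : ℝ) 1) univ ^ (-q⁻¹.toReal) := by
  rw [Measure.restrict_apply_univ, Real.volume_Icc, sub_neg_eq_add, one_add_one_eq_two,
    ENNReal.ofReal_rpow_of_pos two_pos, ← ENNReal.ofReal_mul (by positivity),
    ← Real.rpow_add two_pos, sub_eq_add_neg]

theorem trapConst_mono (n : ℕ) : Monotone (trapConst n) := by
  intro q₁ q₂ hq
  simp only [trapConst, sInf_image]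
  refine iInf₂_mono fun φ _ => ?_
  rw [ofReal_two_rpow_neg_sub, ofReal_two_rpow_neg_sub, mul_assoc, mul_assoc]
  gcongr ENNReal.ofReal _ * ?_ / _
  exact measure_univ_rpow_neg_mul_eLpNorm_le (μ := volume.restrict (Icc (-1 : ℝ) 1))
    (by simp) (by simp) hq φ.continuous.aestronglyMeasurable

theorem trapConst_top (n : ℕ) :
    trapConst n ∞ =
      ENNReal.ofReal (2 ^ (-(n : ℝ))) * ENNReal.ofReal (2 ^ (n - 1))⁻¹ / (n.factorial : ℝ≥0∞) := by
  set g := fun t => ENNReal.ofReal (2 ^ (-(n : ℝ))) * t / (n.factorial : ℝ≥0∞)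
  have hg : Monotone g := fun _ _ h => by dsimp only [g]; gcongr
  rw [trapConst, ENNReal.inv_top, ENNReal.toReal_zero, sub_zero, ← image_image g]
  exact (hg.map_isLeast (isLeast_eLpNorm_top_monic n)).csInf_eq

theorem two_rpow_neg_mul_inv_two_pow_sub_one {n : ℕ} (hn : 1 ≤ n) :
    (2 : ℝ) ^ (-(n : ℝ)) * (2 ^ (n - 1))⁻¹ = 2 ^ ((1 : ℤ) - 2 * n) := by
  obtain ⟨m, rfl⟩ := Nat.exists_eq_add_of_le' hn
  rw [Real.rpow_neg two_pos.le, Real.rpow_natCast, ← mul_inv, ← pow_add, ← zpow_natCast,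
    ← zpow_neg]
  congr 1
  push_cast
  ring

/-- `K_{n,p}` is nonincreasing in `p`; in particular `K_{n,p} ≤ K_{n,1} = 2^{1-2n}/n!`. -/
theorem trapConst_antitone (n : ℕ) (hn : 1 ≤ n) :
    (∀ p₁ q₁ p₂ q₂ : ℝ≥0∞, p₁.HolderConjugate q₁ → p₂.HolderConjugate q₂ →
        p₁ ≤ p₂ → trapConst n q₂ ≤ trapConst n q₁)
    ∧ trapConst n ⊤ = ENNReal.ofReal ((2 : ℝ) ^ ((1 : ℤ) - 2 * n) / n.factorial)
    ∧ ∀ p q : ℝ≥0∞, p.HolderConjugate q → trapConst n q ≤ trapConst n ⊤ := by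
  have hanti : ∀ p₁ q₁ p₂ q₂ : ℝ≥0∞, p₁.HolderConjugate q₁ → p₂.HolderConjugate q₂ →
      p₁ ≤ p₂ → trapConst n q₂ ≤ trapConst n q₁ :=
    fun _ _ _ _ h₁ h₂ hp => trapConst_mono n (h₁.le_of_le h₂ hp)
  refine ⟨hanti, ?_, fun p q h => hanti 1 ⊤ p q .one_top h h.one_le⟩
  rw [trapConst_top, ← ENNReal.ofReal_mul (by positivity), ← ENNReal.ofReal_natCast,
    ← ENNReal.ofReal_div_of_pos (by positivity), two_rpow_neg_mul_inv_two_pow_sub_one hn]
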